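/- Let p be a prime and let b, s, t, u be integers with s ≥ 0 and t ≥ 0. For m ≥ 0 define the rational number S_m := ∑_{k=0}^{m} p^{u(m−k)} ∑_{l=0}^{k−1} p^{l·s}·( B̃_{t+1}(p^{k−l})/p^{k−l} − p^b·B̃_{t+1}(p^{k−l−1})/p^{k−l−1} ). (1) If s ≥ 1 and u ≥ 1, then lim_{m→∞} S_m = (B_t/(1−p^s))·((1−p^b)/(1−p^u)) in ℚ_p. (2) If ε ≥ 1 is an integer with u + ε ≥ 1, then lim_{m→∞} p^{εm}·S_m = 0 in ℚ_p. -/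

import Mathlib

open Filter Topology

/-- `B̃_t(x) := (B_t(x) − B_t)/t`, where `B_t(x)` is the `t`-th Bernoulli
polynomial and `B_t = B_t(0)` the `t`-th Bernoulli number. -/
noncomputable def Btil (t : ℕ) (x : ℚ) : ℚ :=
  ((Polynomial.bernoulli t).eval x - bernoulli t) / t

/-- The rational number
`S_m := ∑_{k=0}^{m} p^{u(m−k)} ∑_{l=0}^{k−1} p^{ls}
  (B̃_{t+1}(p^{k−l})/p^{k−l} − p^b B̃_{t+1}(p^{k−l−1})/p^{k−l−1})`. -/
noncomputable def Ssum (p : ℕ) (b : ℤ) (s t : ℕ) (u : ℤ) (m : ℕ) : ℚ :=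
  ∑ k ∈ Finset.range (m + 1),
    (p : ℚ) ^ (u * ((m : ℤ) - (k : ℤ))) *
      ∑ l ∈ Finset.range k,
        (p : ℚ) ^ (l * s) *
          (Btil (t + 1) ((p : ℚ) ^ ((k : ℤ) - l)) / (p : ℚ) ^ ((k : ℤ) - l) -
            (p : ℚ) ^ b * Btil (t + 1) ((p : ℚ) ^ ((k : ℤ) - l - 1)) /
              (p : ℚ) ^ ((k : ℤ) - l - 1))

/-!
Reindexing the inner sum by `j = k - l` exhibits `S_m` as a geometric convolution
`∑_{k ≤ m} (p^u)^(m-k) T_k`, where `T_k = ∑_{j ≤ k} (p^s)^(k-j) a_j` is again one and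
`a_j = B̃_{t+1}(p^j)/p^j - p^b B̃_{t+1}(p^(j-1))/p^(j-1)`. Since `B̃_{t+1}(x)/x` is a polynomial
in `x` with constant term `B_t` and `p^j → 0` in `ℚ_p`, `a_j → B_t (1 - p^b)`; convolving a
convergent sequence with the powers of some `x` with `‖x‖ < 1` multiplies its limit by
`(1 - x)⁻¹`. For (2), `p^(εm) S_m` is the geometric convolution of `p^(u+ε)` with `p^(εk) T_k`,
which tends to `0` because `T` is bounded by the ultrametric inequality.
-/

open Finset

section GeomConv

def geomConv {R : Type*} [Semiring R] (x : R) (a : ℕ → R) (m : ℕ) : R :=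
  ∑ k ∈ range (m + 1), x ^ (m - k) * a k

theorem geomConv_eq_sum_range {R : Type*} [Semiring R] (x : R) {a : ℕ → R} (ha : a 0 = 0)
    (m : ℕ) : geomConv x a m = ∑ l ∈ range m, x ^ l * a (m - l) := by
  rw [geomConv, ← sum_range_reflect, sum_range_succ, add_tsub_cancel_right, tsub_self, ha,
    mul_zero, add_zero]
  refine sum_congr rfl fun l hl => ?_
  rw [Nat.sub_sub_self (mem_range.1 hl).le]

theorem map_geomConv {R S F : Type*} [Semiring R] [Semiring S] [FunLike F R S]
    [RingHomClass F R S] (f : F) (x : R) (a : ℕ → R) (m : ℕ) :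
    f (geomConv x a m) = geomConv (f x) (fun k => f (a k)) m := by
  simp [geomConv, map_sum, map_mul, map_pow]

theorem pow_mul_geomConv {R : Type*} [CommSemiring R] (z x : R) (a : ℕ → R) (m : ℕ) :
    z ^ m * geomConv x a m = geomConv (z * x) (fun k => z ^ k * a k) m := by
  rw [geomConv, geomConv, mul_sum]
  refine sum_congr rfl fun k hk => ?_
  obtain ⟨j, rfl⟩ := Nat.exists_eq_add_of_le (Nat.le_of_lt_succ (mem_range.1 hk))
  rw [Nat.add_sub_cancel_left, mul_pow, pow_add]
  ring

theorem norm_geomConv_le {K : Type*} [NormedField K] [IsUltrametricDist K] {x : K}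
    (hx : ‖x‖ ≤ 1) {a : ℕ → K} {M : ℝ} (ha : ∀ k, ‖a k‖ ≤ M) (m : ℕ) :
    ‖geomConv x a m‖ ≤ M := by
  refine IsUltrametricDist.norm_sum_le_of_forall_le_of_nonneg ((norm_nonneg _).trans (ha 0))
    fun k _ => ?_
  rw [norm_mul, norm_pow]
  exact (mul_le_of_le_one_left (norm_nonneg _) (pow_le_one₀ (norm_nonneg x) hx)).trans (ha k)

theorem tendsto_geomConv {K : Type*} [NormedField K] [CompleteSpace K] {x : K} (hx : ‖x‖ < 1)
    {a : ℕ → K} {A : K} (ha : Tendsto a atTop (𝓝 A)) :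
    Tendsto (geomConv x a) atTop (𝓝 ((1 - x)⁻¹ * A)) := by
  -- Tannery's theorem for `∑_j x^j a_(m-j)`, dominated by `‖x‖^j sup ‖a‖`.
  obtain ⟨M, hM⟩ := ha.norm.bddAbove_range
  have hconv : geomConv x a = fun m => ∑' j, if j ≤ m then x ^ j * a (m - j) else 0 := by
    funext m
    rw [tsum_eq_sum (s := range (m + 1)) fun j hj => if_neg (by simpa using hj), geomConv,
      ← sum_range_reflect]
    refine sum_congr rfl fun j hj => ?_
    have hjm : j ≤ m := Nat.le_of_lt_succ (mem_range.1 hj)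
    rw [if_pos hjm, add_tsub_cancel_right, Nat.sub_sub_self hjm]
  rw [hconv, ← (hasSum_geometric_of_norm_lt_one hx).mul_right A |>.tsum_eq]
  refine tendsto_tsum_of_dominated_convergence (bound := fun j => ‖x‖ ^ j * M)
    ((summable_geometric_of_lt_one (norm_nonneg x) hx).mul_right M) (fun j => ?_) ?_
  · refine (tendsto_const_nhds.mul (ha.comp (tendsto_sub_atTop_nat j))).congr' ?_
    filter_upwards [eventually_ge_atTop j] with m hm
    simp [hm]
  · refine .of_forall fun m j => ?_
    split_ifs
    · rw [norm_mul, norm_pow]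
      exact mul_le_mul_of_nonneg_left (hM ⟨m - j, rfl⟩) (by positivity)
    · rw [norm_zero]
      exact mul_nonneg (by positivity) ((norm_nonneg _).trans (hM ⟨0, rfl⟩))

end GeomConv

section Bernoulli

theorem Btil_succ_div_self (t : ℕ) {x : ℚ} (hx : x ≠ 0) :
    Btil (t + 1) x / x = (Polynomial.bernoulli (t + 1)).divX.eval x / (t + 1) := by
  conv_lhs => rw [Btil, ← Polynomial.divX_mul_X_add (Polynomial.bernoulli (t + 1)),
    Polynomial.coeff_zero_eq_eval_zero, Polynomial.bernoulli_eval_zero]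
  rw [Polynomial.eval_add, Polynomial.eval_mul, Polynomial.eval_X, Polynomial.eval_C,
    add_sub_cancel_right, Nat.cast_add_one]
  field_simp

theorem divX_bernoulli_succ_eval_zero (t : ℕ) :
    (Polynomial.bernoulli (t + 1)).divX.eval 0 / (t + 1) = bernoulli t := by
  rw [← Polynomial.coeff_zero_eq_eval_zero, Polynomial.coeff_divX, Polynomial.coeff_bernoulli,
    if_pos (by omega), Nat.add_sub_cancel, Nat.choose_one_right]
  push_cast
  field_simp

theorem tendsto_Btil_succ_div_self {K : Type*} [Field K] [CharZero K] [TopologicalSpace K]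
    [IsTopologicalRing K] (t : ℕ) {ι : Type*} {l : Filter ι} {x : ι → ℚ} (hx0 : ∀ i, x i ≠ 0)
    (hx : Tendsto (fun i => (x i : K)) l (𝓝 0)) :
    Tendsto (fun i => ((Btil (t + 1) (x i) / x i : ℚ) : K)) l (𝓝 (bernoulli t : K)) := by
  let D := (Polynomial.bernoulli (t + 1)).divX
  have hcast (q : ℚ) : Polynomial.aeval (q : K) D / (t + 1) = ((D.eval q / (t + 1) : ℚ) : K) := by
    rw [← eq_ratCast (algebraMap ℚ K), Polynomial.aeval_algebraMap_apply_eq_algebraMap_eval]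
    push_cast
    rfl
  have hlim := (((Polynomial.continuous_aeval D).div_const (t + 1 : K)).tendsto 0).comp hx
  rw [← Rat.cast_zero, Function.comp_def, hcast, divX_bernoulli_succ_eval_zero] at hlim
  simpa only [hcast, Btil_succ_div_self t (hx0 _)] using hlim

end Bernoulli

/-- The value at `j = 0` is a dummy that makes the inner sum of `Ssum` a full `geomConv`. -/
noncomputable def ssumCoeff (p : ℕ) (b : ℤ) (t j : ℕ) : ℚ :=
  if j = 0 then 0 else
    Btil (t + 1) ((p : ℚ) ^ j) / (p : ℚ) ^ j -
      (p : ℚ) ^ b * Btil (t + 1) ((p : ℚ) ^ (j - 1)) / (p : ℚ) ^ (j - 1)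

theorem Ssum_eq_geomConv (p : ℕ) (b : ℤ) (s t : ℕ) (u : ℤ) (m : ℕ) :
    Ssum p b s t u m = geomConv ((p : ℚ) ^ u) (geomConv ((p : ℚ) ^ s) (ssumCoeff p b t)) m := by
  rw [Ssum, geomConv]
  refine sum_congr rfl fun k hk => ?_
  rw [geomConv_eq_sum_range _ (a := ssumCoeff p b t) (if_pos rfl), ← zpow_natCast ((p : ℚ) ^ u),
    ← zpow_mul, Nat.cast_sub (Nat.le_of_lt_succ (mem_range.1 hk))]
  refine congrArg _ (sum_congr rfl fun l hl => ?_)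
  have hlk := mem_range.1 hl
  have hexp : (k : ℤ) - l = (k - l : ℕ) := by omega
  have hexp' : (k : ℤ) - l - 1 = (k - l - 1 : ℕ) := by omega
  rw [hexp', hexp, zpow_natCast, zpow_natCast, ssumCoeff, if_neg (by omega), ← pow_mul,
    mul_comm s l]

theorem ratCast_Ssum {K : Type*} [DivisionRing K] [CharZero K] (p : ℕ) (b : ℤ) (s t : ℕ) (u : ℤ)
    (m : ℕ) :
    (Ssum p b s t u m : K) =
      geomConv ((p : K) ^ u) (geomConv ((p : K) ^ s) fun j => (ssumCoeff p b t j : K)) m := by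
  have hmap := map_geomConv (Rat.castHom K)
  simp only [Rat.coe_castHom] at hmap
  rw [Ssum_eq_geomConv, hmap, funext (hmap _ _)]
  push_cast
  rfl

theorem tendsto_ssumCoeff (p : ℕ) [Fact p.Prime] (b : ℤ) (t : ℕ) :
    Tendsto (fun j => (ssumCoeff p b t j : ℚ_[p])) atTop
      (𝓝 ((bernoulli t : ℚ_[p]) * (1 - (p : ℚ_[p]) ^ b))) := by
  have hp : (p : ℚ) ≠ 0 := Nat.cast_ne_zero.2 (Fact.out : p.Prime).ne_zero
  have hquot := tendsto_Btil_succ_div_self (K := ℚ_[p]) t (x := fun j : ℕ => (p : ℚ) ^ j)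
    (fun j => pow_ne_zero j hp) (by
      push_cast
      exact tendsto_pow_atTop_nhds_zero_of_norm_lt_one Padic.norm_p_lt_one)
  have hlim := hquot.sub ((hquot.comp (tendsto_sub_atTop_nat 1)).const_mul ((p : ℚ_[p]) ^ b))
  rw [mul_one_sub, mul_comm]
  refine hlim.congr' ?_
  filter_upwards [eventually_ne_atTop 0] with j hj
  simp only [ssumCoeff, if_neg hj, Function.comp_apply, mul_div_assoc]
  push_cast
  rfl

theorem Padic.norm_p_zpow_lt_one {p : ℕ} [Fact p.Prime] {n : ℤ} (hn : 0 < n) :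
    ‖(p : ℚ_[p]) ^ n‖ < 1 := by
  rw [Padic.norm_p_zpow]
  exact zpow_lt_one_of_neg₀ (by exact_mod_cast (Fact.out : p.Prime).one_lt) (neg_neg_of_pos hn)

/-- Let `p` be a prime and `b, s, t, u` integers with `s ≥ 0`, `t ≥ 0`.
(1) If `s ≥ 1` and `u ≥ 1`, then `lim_{m→∞} S_m
    = (B_t/(1−p^s))((1−p^b)/(1−p^u))` in `ℚ_p`.
(2) If `ε ≥ 1` is an integer with `u + ε ≥ 1`, then
    `lim_{m→∞} p^{εm} S_m = 0` in `ℚ_p`. -/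
theorem double_bernoulli_sum_p_adic_limit (p : ℕ) [Fact p.Prime] (b : ℤ)
    (s t : ℕ) (u : ℤ) :
    (1 ≤ s → 1 ≤ u →
      Tendsto (fun m : ℕ => ((Ssum p b s t u m : ℚ) : ℚ_[p])) atTop
        (nhds (((bernoulli t : ℚ) : ℚ_[p]) / (1 - (p : ℚ_[p]) ^ (s : ℤ)) *
          ((1 - (p : ℚ_[p]) ^ b) / (1 - (p : ℚ_[p]) ^ u))))) ∧
    (∀ ε : ℤ, 1 ≤ ε → 1 ≤ u + ε →
      Tendsto
        (fun m : ℕ => (p : ℚ_[p]) ^ (ε * (m : ℤ)) * ((Ssum p b s t u m : ℚ) : ℚ_[p]))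
        atTop (nhds 0)) := by
  have hp : (p : ℚ_[p]) ≠ 0 := Nat.cast_ne_zero.2 (Fact.out : p.Prime).ne_zero
  simp only [ratCast_Ssum]
  refine ⟨fun hs hu => ?_, fun ε hε huε => ?_⟩
  · have hT := tendsto_geomConv
      (by rw [norm_pow]; exact pow_lt_one₀ (norm_nonneg _) Padic.norm_p_lt_one (by omega : s ≠ 0))
      (tendsto_ssumCoeff p b t)
    convert tendsto_geomConv (Padic.norm_p_zpow_lt_one (p := p) hu) hT using 2
    rw [zpow_natCast]
    ring
  · obtain ⟨M, hM⟩ := (tendsto_ssumCoeff p b t).norm.bddAbove_range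
    have hT : ∀ k, ‖geomConv ((p : ℚ_[p]) ^ s) (fun j => (ssumCoeff p b t j : ℚ_[p])) k‖ ≤ M :=
      norm_geomConv_le (by rw [norm_pow]; exact pow_le_one₀ (norm_nonneg _) Padic.norm_p_lt_one.le)
        (fun j => hM ⟨j, rfl⟩)
    have hlim := tendsto_geomConv (Padic.norm_p_zpow_lt_one (p := p) (n := ε + u) (by omega))
      ((tendsto_pow_atTop_nhds_zero_of_norm_lt_one (Padic.norm_p_zpow_lt_one (p := p) hε)
        ).zero_mul_isBoundedUnder_le (isBoundedUnder_of ⟨M, hT⟩))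
    rw [mul_zero] at hlim
    refine hlim.congr fun m => ?_
    rw [zpow_mul, zpow_natCast, pow_mul_geomConv, zpow_add₀ hp]
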